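/- arXiv:2003.06304 — 6 statements merged into one kernel-verified Lean document; each statement's English description precedes it below -/
import Mathlib

section
/- (Lemma 1, MISO case.) Let (A, B, C, D) be a state-space realization with A ∈ ℝ^{n×n}, B ∈ ℝ^{n×m}, C ∈ ℝ^{1×n}, D ∈ ℝ^{1×m} (a multi-input single-output system of order n). Let C₀ ∈ ℝ^{1×n} be any row vector such that the pair (A, C₀) is observable. Then there exist matrices B₀ ∈ ℝ^{n×m} and D₀ ∈ ℝ^{1×m} such that the realization (A, B₀, C₀, D₀) is input-output equivalent to (A, B, C, D); moreover one may take D₀ = D and B₀ = T B where T = Σ_{i=0}^{n−1} tᵢ Aⁱ is chosen so that C₀ T = C. -/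
/-!
Observability of `(A, C₀)` means that `C₀, C₀ A, …, C₀ Aⁿ⁻¹` is a basis of the row space, so
`C = C₀ T` for a polynomial `T = ∑ tᵢ Aⁱ` in `A`. Since `T` commutes with `A`, every Markov
parameter satisfies `C Aⁱ B = C₀ T Aⁱ B = C₀ Aⁱ (T B)`, so `B₀ = T B`, `D₀ = D` will do.
-/

open Matrix

theorem LinearIndependent.exists_sum_smul_eq_of_card_eq_finrank {K V ι : Type*} [DivisionRing K]
    [AddCommGroup V] [Module K V] [FiniteDimensional K V] [Fintype ι] {v : ι → V}
    (hv : LinearIndependent K v) (hcard : Fintype.card ι = Module.finrank K V) (x : V) :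
    ∃ t : ι → K, ∑ i, t i • v i = x :=
  (Submodule.mem_span_range_iff_exists_fun K).mp
    (hv.span_eq_top_of_card_eq_finrank' hcard ▸ Submodule.mem_top)

theorem Commute.sum_smul_pow_self {R M ι : Type*} [CommSemiring R] [Semiring M] [Algebra R M]
    (s : Finset ι) (t : ι → R) (e : ι → ℕ) (a : M) :
    Commute (∑ i ∈ s, t i • a ^ e i) a :=
  Commute.sum_left _ _ _ fun i _ => ((Commute.self_pow a (e i)).symm).smul_left (t i)

theorem Matrix.exists_mul_sum_smul_pow_eq_of_linearIndependent {K : Type*} [Field K] {n : ℕ}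
    (A : Matrix (Fin n) (Fin n) K) {C₀ : Matrix (Fin 1) (Fin n) K}
    (hobs : LinearIndependent K fun i : Fin n => C₀ * A ^ (i : ℕ)) (C : Matrix (Fin 1) (Fin n) K) :
    ∃ t : Fin n → K, C₀ * ∑ i, t i • A ^ (i : ℕ) = C := by
  obtain ⟨t, ht⟩ := hobs.exists_sum_smul_eq_of_card_eq_finrank (by simp [Module.finrank_matrix]) C
  exact ⟨t, by simpa only [Matrix.mul_sum, Matrix.mul_smul] using ht⟩

theorem Matrix.mul_mul_pow_mul_of_commute {R l n m : Type*} [CommSemiring R] [Fintype n]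
    [DecidableEq n] {A T : Matrix n n R} (hT : Commute T A) (C₀ : Matrix l n R)
    (B : Matrix n m R) (k : ℕ) : C₀ * T * A ^ k * B = C₀ * A ^ k * (T * B) := by
  rw [Matrix.mul_assoc C₀, (hT.pow_right k).eq, ← Matrix.mul_assoc C₀, Matrix.mul_assoc]

/-- **Lemma 1, MISO case.** Given a realization `(A, B, C, D)` of a
multi-input single-output system and any row vector `C₀` with `(A, C₀)` observable,
there exist `B₀`, `D₀` making `(A, B₀, C₀, D₀)` input-output equivalent to
`(A, B, C, D)`; moreover one may take `D₀ = D` and `B₀ = T B` where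
`T = ∑ tᵢ Aⁱ` satisfies `C₀ T = C`. -/
theorem miso_equivalent_realization {n m : ℕ}
    (A : Matrix (Fin n) (Fin n) ℝ) (B : Matrix (Fin n) (Fin m) ℝ)
    (C : Matrix (Fin 1) (Fin n) ℝ) (D : Matrix (Fin 1) (Fin m) ℝ)
    (C₀ : Matrix (Fin 1) (Fin n) ℝ)
    (hobs : LinearIndependent ℝ (fun i : Fin n => C₀ * A ^ (i : ℕ))) :
    ∃ (B₀ : Matrix (Fin n) (Fin m) ℝ) (D₀ : Matrix (Fin 1) (Fin m) ℝ) (t : Fin n → ℝ),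
      D₀ = D ∧
      B₀ = (∑ i : Fin n, t i • A ^ (i : ℕ)) * B ∧
      C₀ * (∑ i : Fin n, t i • A ^ (i : ℕ)) = C ∧
      ∀ i : ℕ, C * A ^ i * B = C₀ * A ^ i * B₀ := by
  obtain ⟨t, hCT⟩ := exists_mul_sum_smul_pow_eq_of_linearIndependent A hobs C
  refine ⟨_, D, t, rfl, rfl, hCT, fun k => ?_⟩
  rw [← hCT]
  exact mul_mul_pow_mul_of_commute (Commute.sum_smul_pow_self _ t _ A) C₀ B k
end

section
/- (SIMO analogue of Lemma 1.) Let (A, B, C, D) be a state-space realization with A ∈ ℝ^{n×n}, B ∈ ℝ^{n×1}, C ∈ ℝ^{p×n}, D ∈ ℝ^{p×1} (a single-input multi-output system of order n). Let B₀ ∈ ℝ^{n×1} be any column vector such that the vectors B₀, A B₀, …, A^{n−1} B₀ are linearly independent (i.e., the pair (A, B₀) is controllable). Then there exist matrices C₀ ∈ ℝ^{p×n} and D₀ ∈ ℝ^{p×1} such that the realization (A, B₀, C₀, D₀) is input-output equivalent to (A, B, C, D). -/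
/-!
By Cayley–Hamilton, `A ^ i = ∑_{j < n} c i j • A ^ j`, where `c i j` are the coefficients of
`X ^ i %ₘ χ_A`; the same coefficients therefore expand `A ^ i * V` for every vector `V`.
Controllability makes `A ^ j * B₀` (`j < n`) a basis, so some `C₀` sends `A ^ j * B₀` to
`C * A ^ j * B` for `j < n`, and the common expansion carries this to every `i`.
-/

open Polynomial

namespace Matrix

theorem pow_eq_sum_coeff_modByMonic_charpoly {R n : Type*} [CommRing R] [Nontrivial R]
    [Fintype n] [DecidableEq n] (A : Matrix n n R) (i : ℕ) :
    A ^ i = ∑ j ∈ Finset.range (Fintype.card n), (X ^ i %ₘ A.charpoly).coeff j • A ^ j := by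
  cases isEmpty_or_nonempty n
  · exact Subsingleton.elim _ _
  have hχ : A.charpoly ≠ 1 := fun h => by
    simpa [h, eq_comm, Fintype.card_eq_zero_iff] using A.charpoly_natDegree_eq_dim
  rw [pow_eq_aeval_mod_charpoly, aeval_eq_sum_range'
    ((natDegree_modByMonic_lt _ A.charpoly_monic hχ).trans_eq A.charpoly_natDegree_eq_dim)]

theorem exists_mul_eq_of_linearMap {R m n o : Type*} [CommSemiring R] [Fintype n]
    [DecidableEq n] [Unique o] (f : Matrix n o R →ₗ[R] Matrix m o R) :
    ∃ M : Matrix m n R, ∀ v, M * v = f v := by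
  refine ⟨of fun i k => f (single k default 1) i default, fun v => ?_⟩
  suffices h : mulLeftLinearMap o R (of fun i k => f (single k default 1) i default) = f from
    LinearMap.congr_fun h v
  refine ext_linearMap (h := fun k j => LinearMap.ext fun a => ?_)
  ext i j'
  rw [Subsingleton.elim j default, Subsingleton.elim j' default]
  have hsingle : single k (default : o) a = a • single k default 1 := by
    rw [smul_single, smul_eq_mul, mul_one]
  simp only [LinearMap.coe_comp, Function.comp_apply, singleLinearMap_apply, mulLeftLinearMap_apply]
  rw [mul_single_apply_same, of_apply, hsingle, map_smul, smul_apply, smul_eq_mul, mul_comm]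

theorem exists_mul_eq_of_linearIndependent {K ι m n o : Type*} [Field K] [Fintype ι]
    [Fintype n] [DecidableEq n] [Unique o] {v : ι → Matrix n o K} (hv : LinearIndependent K v)
    (hcard : Fintype.card ι = Fintype.card n) (w : ι → Matrix m o K) :
    ∃ M : Matrix m n K, ∀ i, M * v i = w i := by
  have hfinrank : Fintype.card ι = Module.finrank K (Matrix n o K) := by
    simp [Module.finrank_matrix, hcard]
  let b := basisOfLinearIndependentOfCardEqFinrank' v hv hfinrank
  obtain ⟨M, hM⟩ := exists_mul_eq_of_linearMap (b.constr K w)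
  refine ⟨M, fun i => ?_⟩
  rw [hM, ← coe_basisOfLinearIndependentOfCardEqFinrank' v hv hfinrank, b.constr_basis]

end Matrix

/-- **SIMO analogue of Lemma 1.** Given a realization `(A, B, C, D)` of
a single-input multi-output system and any column vector `B₀` with `(A, B₀)`
controllable (the columns `B₀, AB₀, …, A^{n-1}B₀` are linearly independent), there
exist `C₀`, `D₀` making `(A, B₀, C₀, D₀)` input-output equivalent to `(A, B, C, D)`. -/
theorem simo_equivalent_realization {n p : ℕ}
    (A : Matrix (Fin n) (Fin n) ℝ) (B : Matrix (Fin n) (Fin 1) ℝ)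
    (C : Matrix (Fin p) (Fin n) ℝ) (D : Matrix (Fin p) (Fin 1) ℝ)
    (B₀ : Matrix (Fin n) (Fin 1) ℝ)
    (hctrb : LinearIndependent ℝ (fun i : Fin n => A ^ (i : ℕ) * B₀)) :
    ∃ (C₀ : Matrix (Fin p) (Fin n) ℝ) (D₀ : Matrix (Fin p) (Fin 1) ℝ),
      D₀ = D ∧ ∀ i : ℕ, C * A ^ i * B = C₀ * A ^ i * B₀ := by
  obtain ⟨C₀, hC₀⟩ := Matrix.exists_mul_eq_of_linearIndependent hctrb (by simp)
    fun j : Fin n => C * A ^ (j : ℕ) * B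
  refine ⟨C₀, D, rfl, fun i => ?_⟩
  have hexpand : ∀ V : Matrix (Fin n) (Fin 1) ℝ,
      A ^ i * V = ∑ j : Fin n, (X ^ i %ₘ A.charpoly).coeff j • (A ^ (j : ℕ) * V) := fun V => by
    rw [A.pow_eq_sum_coeff_modByMonic_charpoly i, Fintype.card_fin, ← Fin.sum_univ_eq_sum_range,
      Matrix.sum_mul]
    simp only [Matrix.smul_mul]
  rw [Matrix.mul_assoc C, hexpand, Matrix.mul_assoc C₀, hexpand]
  simp only [Matrix.mul_sum, Matrix.mul_smul, ← Matrix.mul_assoc, hC₀]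
end

section
/- (Theorem on optimality of fixed C, MISO case.) Fix A ∈ ℝ^{n×n} and data u : {1, …, N} → ℝ^m, y : {1, …, N} → ℝ. Suppose (B*, C*, D*) with B* ∈ ℝ^{n×m}, C* ∈ ℝ^{1×n}, D* ∈ ℝ^{1×m} minimizes the output-error cost V(y, u, A, B, C, D) over all (B, C, D). Let C₀ ∈ ℝ^{1×n} be any row vector such that (A, C₀) is observable, and suppose (B₀, D₀) minimizes V(y, u, A, B, C₀, D) over all (B, D). Then V(y, u, A, B*, C*, D*) = V(y, u, A, B₀, C₀, D₀). -/
/-!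
The cost depends on `(B, C)` only through the Markov parameters `C Aᵗ B`. Observability of
`(A, C₀)` with a single output makes the `n` rows `C₀ Aⁱ` a basis of `ℝ^{1×n}`, so
`C* = C₀ M` with `M = ∑ αᵢ Aⁱ` commuting with `A`. Then `(M B*, C₀)` has the same Markov
parameters as `(B*, C*)`, so the fixed-`C₀` problem attains the global optimum.
-/

open Matrix

/-- The output-error cost
`V(y, u, A, B, C, D) = ∑_{t=1}^N ‖y(t) − D u(t) − C ∑_{k=1}^t A^{t−k} B u(k)‖²`,
where `‖·‖` is the Euclidean norm on `ℝ^p` (realized via `EuclideanSpace`). -/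
noncomputable def outputErrorCost {N n m p : ℕ}
    (y : Fin N → Fin p → ℝ) (u : Fin N → Fin m → ℝ)
    (A : Matrix (Fin n) (Fin n) ℝ) (B : Matrix (Fin n) (Fin m) ℝ)
    (C : Matrix (Fin p) (Fin n) ℝ) (D : Matrix (Fin p) (Fin m) ℝ) : ℝ :=
  ∑ t : Fin N,
    ‖(WithLp.equiv 2 (Fin p → ℝ)).symm
        (y t - D *ᵥ u t - C *ᵥ ∑ k ∈ Finset.Iic t, A ^ ((t : ℕ) - (k : ℕ)) *ᵥ (B *ᵥ u k))‖ ^ 2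

lemma mulVec_sum_pow_mulVec {R ι κ μ ν : Type*} [CommSemiring R] [Fintype κ] [DecidableEq κ]
    [Fintype μ] [Fintype ν] (A : Matrix κ κ R) (B : Matrix κ μ R) (C : Matrix ν κ R)
    (s : Finset ι) (e : ι → ℕ) (v : ι → μ → R) :
    C *ᵥ ∑ k ∈ s, A ^ e k *ᵥ (B *ᵥ v k) = ∑ k ∈ s, (C * A ^ e k * B) *ᵥ v k := by
  simp only [mulVec_sum, mulVec_mulVec, Matrix.mul_assoc]

lemma outputErrorCost_eq_of_markov_eq {N n m p : ℕ}
    (y : Fin N → Fin p → ℝ) (u : Fin N → Fin m → ℝ) (A : Matrix (Fin n) (Fin n) ℝ)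
    {B B' : Matrix (Fin n) (Fin m) ℝ}
    {C C' : Matrix (Fin p) (Fin n) ℝ} (D : Matrix (Fin p) (Fin m) ℝ)
    (h : ∀ t : ℕ, C * A ^ t * B = C' * A ^ t * B') :
    outputErrorCost y u A B C D = outputErrorCost y u A B' C' D := by
  unfold outputErrorCost
  refine Finset.sum_congr rfl fun t _ => ?_
  rw [mulVec_sum_pow_mulVec, mulVec_sum_pow_mulVec]
  simp only [h]

lemma exists_commute_mul_eq_of_observable {n : ℕ} {A : Matrix (Fin n) (Fin n) ℝ}
    {C₀ : Matrix (Fin 1) (Fin n) ℝ}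
    (hobs : LinearIndependent ℝ (fun i : Fin n => C₀ * A ^ (i : ℕ)))
    (C : Matrix (Fin 1) (Fin n) ℝ) :
    ∃ M : Matrix (Fin n) (Fin n) ℝ, Commute A M ∧ C = C₀ * M := by
  have hspan := hobs.span_eq_top_of_card_eq_finrank' (by simp [Module.finrank_matrix])
  obtain ⟨α, hα⟩ := (Submodule.mem_span_range_iff_exists_fun ℝ).mp
    (hspan ▸ Submodule.mem_top : C ∈ Submodule.span ℝ _)
  refine ⟨∑ i, α i • A ^ (i : ℕ), ?_, ?_⟩
  · exact Commute.sum_right _ _ _ fun i _ => ((Commute.refl A).pow_right _).smul_right _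
  · rw [← hα, Matrix.mul_sum]
    simp only [Matrix.mul_smul]

lemma markov_eq_of_commute {R κ μ ν : Type*} [Semiring R] [Fintype κ] [DecidableEq κ]
    {A M : Matrix κ κ R} (hM : Commute A M) (C₀ : Matrix ν κ R) (B : Matrix κ μ R) (t : ℕ) :
    C₀ * A ^ t * (M * B) = C₀ * M * A ^ t * B := by
  rw [Matrix.mul_assoc C₀ M, ← (hM.pow_left t).eq]
  simp only [Matrix.mul_assoc]

/-- **optimality of fixed `C`, MISO case.** If `(B*, C*, D*)` minimizes
the output-error cost over all `(B, C, D)` for fixed `A`, `C₀` is any row vector with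
`(A, C₀)` observable, and `(B₀, D₀)` minimizes the cost over all `(B, D)` with `C₀`
fixed, then the two optimal cost values agree. -/
theorem fixed_C_optimality_miso {N n m : ℕ}
    (y : Fin N → Fin 1 → ℝ) (u : Fin N → Fin m → ℝ)
    (A : Matrix (Fin n) (Fin n) ℝ)
    (Bstar : Matrix (Fin n) (Fin m) ℝ) (Cstar : Matrix (Fin 1) (Fin n) ℝ)
    (Dstar : Matrix (Fin 1) (Fin m) ℝ)
    (hmin : ∀ (B : Matrix (Fin n) (Fin m) ℝ) (C : Matrix (Fin 1) (Fin n) ℝ)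
      (D : Matrix (Fin 1) (Fin m) ℝ),
      outputErrorCost y u A Bstar Cstar Dstar ≤ outputErrorCost y u A B C D)
    (C₀ : Matrix (Fin 1) (Fin n) ℝ)
    (hobs : LinearIndependent ℝ (fun i : Fin n => C₀ * A ^ (i : ℕ)))
    (B₀ : Matrix (Fin n) (Fin m) ℝ) (D₀ : Matrix (Fin 1) (Fin m) ℝ)
    (hmin₀ : ∀ (B : Matrix (Fin n) (Fin m) ℝ) (D : Matrix (Fin 1) (Fin m) ℝ),
      outputErrorCost y u A B₀ C₀ D₀ ≤ outputErrorCost y u A B C₀ D) :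
    outputErrorCost y u A Bstar Cstar Dstar = outputErrorCost y u A B₀ C₀ D₀ := by
  obtain ⟨M, hM, rfl⟩ := exists_commute_mul_eq_of_observable hobs Cstar
  have hcost : outputErrorCost y u A (M * Bstar) C₀ Dstar
      = outputErrorCost y u A Bstar (C₀ * M) Dstar :=
    outputErrorCost_eq_of_markov_eq y u A Dstar (markov_eq_of_commute hM C₀ Bstar)
  exact le_antisymm (hmin B₀ C₀ D₀) (hcost ▸ hmin₀ (M * Bstar) Dstar)
end

section
/- (Infimum form of the fixed-B optimality theorem, SIMO case.) Fix A ∈ ℝ^{n×n} and data u : {1, …, N} → ℝ, y : {1, …, N} → ℝ^p. Let B₀ ∈ ℝ^{n×1} be any column vector such that the pair (A, B₀) is controllable. Then the infimum of V(y, u, A, B₀, C, D) over all C ∈ ℝ^{p×n} and D ∈ ℝ^{p×1} equals the infimum of V(y, u, A, B, C, D) over all B ∈ ℝ^{n×1}, C ∈ ℝ^{p×n}, and D ∈ ℝ^{p×1}. -/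
open Matrix

/-!
When `B₀, A B₀, …, A^{n-1} B₀` is a basis, every `B` is `T B₀` for some polynomial `T` in `A`.
Such a `T` commutes with `A`, so the realization `(A, B, C, D)` has the same cost as
`(A, B₀, C T, D)`: fixing `B = B₀` loses nothing, and the two sets of costs coincide.
-/

theorem Matrix.exists_commute_mul_eq_of_linearIndependent_pow_mul {K : Type*} [Field K] {n : ℕ}
    {A : Matrix (Fin n) (Fin n) K} {B₀ : Matrix (Fin n) (Fin 1) K}
    (hli : LinearIndependent K (fun i : Fin n => A ^ (i : ℕ) * B₀))
    (B : Matrix (Fin n) (Fin 1) K) :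
    ∃ T : Matrix (Fin n) (Fin n) K, Commute A T ∧ T * B₀ = B := by
  have hB : B ∈ Submodule.span K (Set.range fun i : Fin n => A ^ (i : ℕ) * B₀) := by
    rw [hli.span_eq_top_of_card_eq_finrank' (by simp [Module.finrank_matrix])]
    exact Submodule.mem_top
  obtain ⟨c, hc⟩ := (Submodule.mem_span_range_iff_exists_fun K).mp hB
  refine ⟨∑ i, c i • A ^ (i : ℕ), ?_, ?_⟩
  · exact Commute.sum_right _ _ _ fun i _ => ((Commute.refl A).pow_right _).smul_right _
  · simpa only [Matrix.sum_mul, Matrix.smul_mul] using hc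

theorem outputErrorCost_mul_input_of_commute {N n m p : ℕ}
    (y : Fin N → Fin p → ℝ) (u : Fin N → Fin m → ℝ)
    {A T : Matrix (Fin n) (Fin n) ℝ} (hAT : Commute A T) (B : Matrix (Fin n) (Fin m) ℝ)
    (C : Matrix (Fin p) (Fin n) ℝ) (D : Matrix (Fin p) (Fin m) ℝ) :
    outputErrorCost y u A (T * B) C D = outputErrorCost y u A B (C * T) D := by
  unfold outputErrorCost
  refine Finset.sum_congr rfl fun t _ => ?_
  have hstate : ∀ k : Fin N, A ^ ((t : ℕ) - k) *ᵥ ((T * B) *ᵥ u k)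
      = T *ᵥ (A ^ ((t : ℕ) - k) *ᵥ (B *ᵥ u k)) := fun k => by
    simp only [mulVec_mulVec, ← Matrix.mul_assoc, (hAT.pow_left _).eq]
  rw [Finset.sum_congr rfl fun k _ => hstate k, ← mulVec_sum, mulVec_mulVec]

/-- **infimum form of the fixed-`B` optimality theorem, SIMO case.**
For any column vector `B₀` with `(A, B₀)` controllable (the columns
`B₀, AB₀, …, A^{n-1}B₀` are linearly independent), the infimum of the output-error
cost over `(C, D)` with `B₀` fixed equals the infimum over all `(B, C, D)`. -/
theorem fixed_B_optimality_simo_inf {N n p : ℕ}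
    (y : Fin N → Fin p → ℝ) (u : Fin N → Fin 1 → ℝ)
    (A : Matrix (Fin n) (Fin n) ℝ)
    (B₀ : Matrix (Fin n) (Fin 1) ℝ)
    (hctrb : LinearIndependent ℝ (fun i : Fin n => A ^ (i : ℕ) * B₀)) :
    sInf {v : ℝ | ∃ (C : Matrix (Fin p) (Fin n) ℝ) (D : Matrix (Fin p) (Fin 1) ℝ),
        v = outputErrorCost y u A B₀ C D} =
      sInf {v : ℝ | ∃ (B : Matrix (Fin n) (Fin 1) ℝ) (C : Matrix (Fin p) (Fin n) ℝ)
        (D : Matrix (Fin p) (Fin 1) ℝ), v = outputErrorCost y u A B C D} := by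
  congr 1
  ext v
  constructor
  · rintro ⟨C, D, rfl⟩
    exact ⟨B₀, C, D, rfl⟩
  · rintro ⟨B, C, D, rfl⟩
    obtain ⟨T, hAT, rfl⟩ := exists_commute_mul_eq_of_linearIndependent_pow_mul hctrb B
    exact ⟨C * T, D, outputErrorCost_mul_input_of_commute y u hAT B₀ C D⟩
end

section
/- (Transfer-function form of Lemma 1, MISO case.) Let A ∈ ℝ^{n×n}, B ∈ ℝ^{n×m}, C ∈ ℝ^{1×n}, and let C₀ ∈ ℝ^{1×n} be such that the pair (A, C₀) is observable. Then there exists B₀ ∈ ℝ^{n×m} such that for every z ∈ ℂ that is not an eigenvalue of A, C (zI − A)^{−1} B = C₀ (zI − A)^{−1} B₀. -/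
open Matrix Polynomial

/-! Observability makes `C₀, C₀A, …, C₀Aⁿ⁻¹` a basis of the row vectors, so `C = C₀ p(A)` for
some polynomial `p`. Since `p(A)` commutes with `A`, it commutes with the resolvent `(zI − A)⁻¹`,
and `B₀ = p(A) B` works: `C (zI − A)⁻¹ B = C₀ (zI − A)⁻¹ p(A) B`. -/

theorem Matrix.exists_eq_mul_aeval_of_linearIndependent {K : Type*} [Field K] {n : ℕ}
    {A : Matrix (Fin n) (Fin n) K} {C₀ : Matrix (Fin 1) (Fin n) K}
    (hobs : LinearIndependent K (fun i : Fin n => C₀ * A ^ (i : ℕ)))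
    (C : Matrix (Fin 1) (Fin n) K) :
    ∃ p : K[X], C = C₀ * aeval A p := by
  have hspan := hobs.span_eq_top_of_card_eq_finrank' (by simp [Module.finrank_matrix])
  obtain ⟨c, rfl⟩ :=
    (Submodule.mem_span_range_iff_exists_fun K).mp (hspan ▸ Submodule.mem_top (x := C))
  refine ⟨∑ i : Fin n, Polynomial.C (c i) * X ^ (i : ℕ), ?_⟩
  simp only [map_sum, Matrix.mul_sum, ← smul_eq_C_mul, map_smul, map_pow, aeval_X,
    Matrix.mul_smul]

theorem Polynomial.commute_aeval_self {R A : Type*} [CommSemiring R] [Semiring A] [Algebra R A]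
    (a : A) (p : R[X]) : Commute (aeval a p) a := by
  simpa using (commute_X p).symm.map (aeval a)

theorem Commute.nonsing_inv_right {R : Type*} [CommRing R] {n : Type*} [Fintype n]
    [DecidableEq n] {P M : Matrix n n R} (h : Commute P M) : Commute P M⁻¹ := by
  rw [nonsing_inv_eq_ringInverse]
  by_cases hM : IsUnit M
  · obtain ⟨u, rfl⟩ := hM
    rw [Ring.inverse_unit]
    exact h.units_inv_right
  · rw [Ring.inverse_non_unit _ hM]
    exact Commute.zero_right P

theorem Commute.resolvent_right {R : Type*} [CommRing R] {n : Type*} [Fintype n]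
    [DecidableEq n] {P A : Matrix n n R} (h : Commute P A) (z : R) :
    Commute P (z • (1 : Matrix n n R) - A)⁻¹ :=
  (((Commute.one_right P).smul_right z).sub_right h).nonsing_inv_right

/-- **transfer-function form of Lemma 1, MISO case.** If `(A, C₀)` is
observable, then there exists `B₀` such that for every `z ∈ ℂ` which is not an
eigenvalue of `A` (i.e. `det (zI − A) ≠ 0` over `ℂ`),
`C (zI − A)⁻¹ B = C₀ (zI − A)⁻¹ B₀`. -/
theorem miso_transfer_function_form {n m : ℕ}
    (A : Matrix (Fin n) (Fin n) ℝ) (B : Matrix (Fin n) (Fin m) ℝ)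
    (C C₀ : Matrix (Fin 1) (Fin n) ℝ)
    (hobs : LinearIndependent ℝ (fun i : Fin n => C₀ * A ^ (i : ℕ))) :
    ∃ B₀ : Matrix (Fin n) (Fin m) ℝ,
      ∀ z : ℂ, (z • (1 : Matrix (Fin n) (Fin n) ℂ) - A.map Complex.ofReal).det ≠ 0 →
        C.map (Complex.ofReal) *
            (z • (1 : Matrix (Fin n) (Fin n) ℂ) - A.map Complex.ofReal)⁻¹ *
            B.map (Complex.ofReal) =
          C₀.map (Complex.ofReal) *
            (z • (1 : Matrix (Fin n) (Fin n) ℂ) - A.map Complex.ofReal)⁻¹ *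
            B₀.map (Complex.ofReal) := by
  obtain ⟨p, rfl⟩ := exists_eq_mul_aeval_of_linearIndependent hobs C
  refine ⟨aeval A p * B, fun z _ => ?_⟩
  have hcomm : Commute ((aeval A p).map Complex.ofReal)
      (z • (1 : Matrix (Fin n) (Fin n) ℂ) - A.map Complex.ofReal)⁻¹ :=
    ((commute_aeval_self A p).map (Complex.ofRealHom.mapMatrix)).resolvent_right z
  have hmap {k l : ℕ} (X : Matrix (Fin k) (Fin n) ℝ) (Y : Matrix (Fin n) (Fin l) ℝ) :
      (X * Y).map Complex.ofReal = X.map Complex.ofReal * Y.map Complex.ofReal :=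
    Matrix.map_mul (f := Complex.ofRealHom)
  rw [hmap, hmap, Matrix.mul_assoc (C₀.map _), hcomm.eq]
  simp only [Matrix.mul_assoc]
end

section
/- (Frequency-domain fixed-C optimality, MISO case, infimum form.) Fix A ∈ ℝ^{n×n}, complex frequency points z₁, …, z_K ∈ ℂ none of which is an eigenvalue of A, and frequency response data G₁, …, G_K ∈ ℂ^{1×m}. Define the frequency-domain cost V(A, B, C, D) = Σ_{k=1}^{K} ‖C (z_k I − A)^{−1} B + D − G_k‖_F², where ‖·‖_F is the Frobenius norm. Let C₀ ∈ ℝ^{1×n} be any row vector such that (A, C₀) is observable. Then the infimum of V(A, B, C₀, D) over all B ∈ ℝ^{n×m} and D ∈ ℝ^{1×m} equals the infimum of V(A, B, C, D) over all B ∈ ℝ^{n×m}, C ∈ ℝ^{1×n}, and D ∈ ℝ^{1×m}. -/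
open Matrix

/-- The squared Frobenius norm `‖M‖_F²` of a complex matrix. -/
noncomputable def frobeniusNormSq {p m : ℕ} (M : Matrix (Fin p) (Fin m) ℂ) : ℝ :=
  ∑ i : Fin p, ∑ j : Fin m, ‖M i j‖ ^ 2

/-- The frequency-domain cost
`V(A, B, C, D) = ∑_{k=1}^K ‖C (z_k I − A)⁻¹ B + D − G_k‖_F²`
for frequency points `z` and frequency response data `G`, with the real matrices
`A, B, C, D` viewed as complex matrices. -/
noncomputable def freqDomainCost {K n m : ℕ} (z : Fin K → ℂ) (G : Fin K → Matrix (Fin 1) (Fin m) ℂ)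
    (A : Matrix (Fin n) (Fin n) ℝ) (B : Matrix (Fin n) (Fin m) ℝ)
    (C : Matrix (Fin 1) (Fin n) ℝ) (D : Matrix (Fin 1) (Fin m) ℝ) : ℝ :=
  ∑ k : Fin K,
    frobeniusNormSq
      (C.map (Complex.ofReal) *
          (z k • (1 : Matrix (Fin n) (Fin n) ℂ) - A.map Complex.ofReal)⁻¹ *
          B.map (Complex.ofReal) +
        D.map (Complex.ofReal) - G k)

/-! Observability makes the rows `C₀ Aⁱ` a basis of the row space, so every output matrix
has the form `C = C₀ P` with `P` a polynomial in `A`. Such a `P` commutes with every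
resolvent `(z I − A)⁻¹`, hence `C (z I − A)⁻¹ B = C₀ (z I − A)⁻¹ (P B)`: every cost value
attained with some `C` is already attained with `C₀`, and the two sets of costs coincide. -/

theorem Commute.ringInverse_right {M₀ : Type*} [MonoidWithZero M₀] {a b : M₀}
    (h : Commute a b) : Commute a (Ring.inverse b) := by
  by_cases hb : IsUnit b
  · obtain ⟨u, rfl⟩ := hb
    rw [Ring.inverse_unit]
    exact h.units_inv_right
  · rw [Ring.inverse_non_unit b hb]
    exact Commute.zero_right a

theorem Matrix.commute_nonsing_inv_right {n R : Type*} [Fintype n] [DecidableEq n] [CommRing R]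
    {A M : Matrix n n R} (h : Commute A M) : Commute A M⁻¹ := by
  rw [nonsing_inv_eq_ringInverse]
  exact h.ringInverse_right

theorem Matrix.exists_commute_eq_mul_of_linearIndependent {K : Type*} [Field K] {n : ℕ}
    {A : Matrix (Fin n) (Fin n) K} {C₀ : Matrix (Fin 1) (Fin n) K}
    (hobs : LinearIndependent K (fun i : Fin n => C₀ * A ^ (i : ℕ)))
    (C : Matrix (Fin 1) (Fin n) K) : ∃ P, Commute A P ∧ C = C₀ * P := by
  have hspan := hobs.span_eq_top_of_card_eq_finrank' (by simp [Module.finrank_matrix])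
  obtain ⟨c, rfl⟩ :=
    (Submodule.mem_span_range_iff_exists_fun K).mp (hspan ▸ Submodule.mem_top (x := C))
  refine ⟨∑ i, c i • A ^ (i : ℕ), ?_, ?_⟩
  · exact Commute.sum_right _ _ _ fun i _ => ((Commute.refl A).pow_right _).smul_right _
  · simp only [Matrix.mul_sum, Matrix.mul_smul]

theorem freqDomainCost_mul_commute {K n m : ℕ} (z : Fin K → ℂ)
    (G : Fin K → Matrix (Fin 1) (Fin m) ℂ) {A P : Matrix (Fin n) (Fin n) ℝ} (hAP : Commute A P)
    (B : Matrix (Fin n) (Fin m) ℝ) (C₀ : Matrix (Fin 1) (Fin n) ℝ) (D : Matrix (Fin 1) (Fin m) ℝ) :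
    freqDomainCost z G A B (C₀ * P) D = freqDomainCost z G A (P * B) C₀ D := by
  unfold freqDomainCost
  refine Finset.sum_congr rfl fun k _ => ?_
  have hres : Commute (P.map Complex.ofReal)
      (z k • (1 : Matrix (Fin n) (Fin n) ℂ) - A.map Complex.ofReal)⁻¹ :=
    Matrix.commute_nonsing_inv_right <|
      ((Commute.one_right _).smul_right _).sub_right (hAP.symm.map Complex.ofRealHom.mapMatrix)
  have hmap {p q r : ℕ} (X : Matrix (Fin p) (Fin q) ℝ) (Y : Matrix (Fin q) (Fin r) ℝ) :
      (X * Y).map Complex.ofReal = X.map Complex.ofReal * Y.map Complex.ofReal :=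
    Matrix.map_mul (f := Complex.ofRealHom)
  simp only [hmap, Matrix.mul_assoc, hres.eq]

theorem freq_domain_fixed_C_optimality_inf_general {K n m : ℕ}
    (A : Matrix (Fin n) (Fin n) ℝ)
    (z : Fin K → ℂ)
    (G : Fin K → Matrix (Fin 1) (Fin m) ℂ)
    (C₀ : Matrix (Fin 1) (Fin n) ℝ)
    (hobs : LinearIndependent ℝ (fun i : Fin n => C₀ * A ^ (i : ℕ))) :
    sInf {v : ℝ | ∃ (B : Matrix (Fin n) (Fin m) ℝ) (D : Matrix (Fin 1) (Fin m) ℝ),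
        v = freqDomainCost z G A B C₀ D} =
      sInf {v : ℝ | ∃ (B : Matrix (Fin n) (Fin m) ℝ) (C : Matrix (Fin 1) (Fin n) ℝ)
        (D : Matrix (Fin 1) (Fin m) ℝ), v = freqDomainCost z G A B C D} := by
  congr 1
  ext v
  constructor
  · rintro ⟨B, D, rfl⟩
    exact ⟨B, C₀, D, rfl⟩
  · rintro ⟨B, C, D, rfl⟩
    obtain ⟨P, hAP, rfl⟩ := Matrix.exists_commute_eq_mul_of_linearIndependent hobs C
    exact ⟨P * B, D, freqDomainCost_mul_commute z G hAP B C₀ D⟩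

/-- **frequency-domain fixed-`C` optimality, MISO case, infimum form.**
If none of the frequency points `z_k` is an eigenvalue of `A` and `(A, C₀)` is
observable, then the infimum of the frequency-domain cost over `(B, D)` with `C₀`
fixed equals the infimum over all `(B, C, D)`. -/
theorem freq_domain_fixed_C_optimality_inf {K n m : ℕ}
    (A : Matrix (Fin n) (Fin n) ℝ)
    (z : Fin K → ℂ)
    (hz : ∀ k : Fin K, (z k • (1 : Matrix (Fin n) (Fin n) ℂ) - A.map Complex.ofReal).det ≠ 0)
    (G : Fin K → Matrix (Fin 1) (Fin m) ℂ)
    (C₀ : Matrix (Fin 1) (Fin n) ℝ)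
    (hobs : LinearIndependent ℝ (fun i : Fin n => C₀ * A ^ (i : ℕ))) :
    sInf {v : ℝ | ∃ (B : Matrix (Fin n) (Fin m) ℝ) (D : Matrix (Fin 1) (Fin m) ℝ),
        v = freqDomainCost z G A B C₀ D} =
      sInf {v : ℝ | ∃ (B : Matrix (Fin n) (Fin m) ℝ) (C : Matrix (Fin 1) (Fin n) ℝ)
        (D : Matrix (Fin 1) (Fin m) ℝ), v = freqDomainCost z G A B C D} :=
  freq_domain_fixed_C_optimality_inf_general A z G C₀ hobs
end
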